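/- An R-module M is S-finitely presented if and only if M is finitely generated and M is S-Mittag-Leffler with respect to the class of all flat R-modules (equivalently, for every index set I the canonical map M ⊗_R R^I → M^I has S-torsion kernel). -/
import Mathlib


/-- A module `M` is `S`-finite if it has a finitely generated submodule `N`
with `s • M ⊆ N` for some `s ∈ S`. -/
def IsSFinite (R : Type*) [CommRing R] (S : Submonoid R) (M : Type*) [AddCommGroup M]
    [Module R M] : Prop :=
  ∃ N : Submodule R M, N.FG ∧ ∃ s ∈ S, ∀ m : M, s • m ∈ N

/-- A module `M` is `S`-finitely presented if there is an exact sequence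
`0 → K → F → M → 0` with `F` finitely generated free and `K` `S`-finite. -/
def IsSFinitelyPresented (R : Type*) [CommRing R] (S : Submonoid R) (M : Type*)
    [AddCommGroup M] [Module R M] : Prop :=
  ∃ (n : ℕ) (f : (Fin n → R) →ₗ[R] M), Function.Surjective f ∧
    IsSFinite R S (LinearMap.ker f)

/-- The canonical map `M ⊗[R] (∀ i, N i) →ₗ[R] ∀ i, M ⊗[R] N i`. -/
noncomputable def tensorPiMap (R : Type*) [CommRing R] (M : Type*) [AddCommGroup M]
    [Module R M] {ι : Type*} (N : ι → Type*) [∀ i, AddCommGroup (N i)]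
    [∀ i, Module R (N i)] :
    (TensorProduct R M (∀ i, N i)) →ₗ[R] (∀ i, TensorProduct R M (N i)) :=
  LinearMap.pi fun i => LinearMap.lTensor M (LinearMap.proj i)

/-- `M` is `S`-Mittag-Leffler with respect to a class `Q` of `R`-modules if for every
family of modules in `Q`, the canonical map `M ⊗ ∏ Qᵢ → ∏ (M ⊗ Qᵢ)` has `S`-torsion kernel. -/
def IsSMittagLeffler (R : Type) [CommRing R] (S : Submonoid R) (M : Type) [AddCommGroup M]
    [Module R M] (Q : ModuleCat R → Prop) : Prop :=
  ∀ (ι : Type) (N : ι → ModuleCat R), (∀ i, Q (N i)) →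
    ∀ x ∈ LinearMap.ker (tensorPiMap R M fun i => (N i : Type)), ∃ s ∈ S, s • x = 0



open TensorProduct LinearMap

section Aux

variable {R : Type*} [CommRing R]

lemma tensorPiMap_aux_tmul {M : Type*} [AddCommGroup M] [Module R M] {ι : Type*}
    (N : ι → Type*) [∀ i, AddCommGroup (N i)] [∀ i, Module R (N i)]
    (m : M) (g : ∀ i, N i) (i : ι) :
    (LinearMap.pi fun i => LinearMap.lTensor M (LinearMap.proj i) :
      TensorProduct R M (∀ i, N i) →ₗ[R] ∀ i, TensorProduct R M (N i)) (m ⊗ₜ g) i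
      = m ⊗ₜ g i := rfl

lemma smul_single_one_aux {n : ℕ} (v : Fin n → R) (j : Fin n) :
    v j • (Pi.single j 1 : Fin n → R) = Pi.single j (v j) := by
  ext i
  by_cases h : i = j <;> simp [Pi.single_apply, h]

lemma sum_single_tmul_aux {n : ℕ} {N : Type*} [AddCommGroup N] [Module R N]
    (y : TensorProduct R (Fin n → R) N) :
    ∑ j : Fin n, (Pi.single j 1 : Fin n → R) ⊗ₜ[R]
      (TensorProduct.lid R N ((LinearMap.proj j).rTensor N y)) = y := by
  induction y using TensorProduct.induction_on with
  | zero => simp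
  | tmul v m =>
    have : ∀ j : Fin n, (Pi.single j 1 : Fin n → R) ⊗ₜ[R]
        (TensorProduct.lid R N ((LinearMap.proj j).rTensor N (v ⊗ₜ m)))
        = (Pi.single j (v j) : Fin n → R) ⊗ₜ[R] m := by
      intro j
      rw [rTensor_tmul]
      simp only [proj_apply, lid_tmul]
      rw [tmul_smul, smul_tmul', smul_single_one_aux]
    rw [Finset.sum_congr rfl fun j _ => this j, ← sum_tmul, Finset.univ_sum_single]
  | add a b ha hb =>
    simp only [map_add, tmul_add, Finset.sum_add_distrib, ha, hb]

end Aux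


section Aux2

variable {R : Type*} [CommRing R]
variable {ι : Type*} (N : ι → Type*) [∀ i, AddCommGroup (N i)] [∀ i, Module R (N i)]

lemma tensorPiMap_tmul {M : Type*} [AddCommGroup M] [Module R M]
    (m : M) (g : ∀ i, N i) (i : ι) :
    tensorPiMap R M N (m ⊗ₜ g) i = m ⊗ₜ g i := rfl

lemma tensorPiMap_natural {M M' : Type*} [AddCommGroup M] [Module R M]
    [AddCommGroup M'] [Module R M'] (f : M →ₗ[R] M')
    (x : TensorProduct R M (∀ i, N i)) (i : ι) :
    tensorPiMap R M' N (f.rTensor _ x) i = f.rTensor (N i) (tensorPiMap R M N x i) := by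
  have h : (LinearMap.lTensor M' (LinearMap.proj i)) ∘ₗ (f.rTensor (∀ i, N i))
      = (f.rTensor (N i)) ∘ₗ LinearMap.lTensor M (LinearMap.proj i) := by
    rw [lTensor_comp_rTensor, rTensor_comp_lTensor]
  exact DFunLike.congr_fun h x

/-- Explicit inverse to `tensorPiMap` for finite free modules. -/
noncomputable def tensorPiInv (n : ℕ) :
    (∀ i, TensorProduct R (Fin n → R) (N i)) →ₗ[R] TensorProduct R (Fin n → R) (∀ i, N i) :=
  ∑ j : Fin n, (TensorProduct.mk R (Fin n → R) (∀ i, N i) (Pi.single j 1)).comp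
    (LinearMap.pi fun i => (TensorProduct.lid R (N i)).toLinearMap ∘ₗ
      (LinearMap.proj j).rTensor (N i) ∘ₗ LinearMap.proj i)

lemma tensorPiInv_apply (n : ℕ) (z : ∀ i, TensorProduct R (Fin n → R) (N i)) :
    tensorPiInv N n z = ∑ j : Fin n, (Pi.single j 1 : Fin n → R) ⊗ₜ
      (fun i => TensorProduct.lid R (N i) ((LinearMap.proj j).rTensor (N i) (z i))) := by
  simp [tensorPiInv, LinearMap.sum_apply]
  rfl

lemma tensorPiMap_fin_bijective (n : ℕ) :
    Function.Bijective (tensorPiMap R (Fin n → R) N) := by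
  rw [Function.bijective_iff_has_inverse]
  refine ⟨tensorPiInv N n, ?_, ?_⟩
  · intro x
    have : (tensorPiInv N n) ∘ₗ tensorPiMap R (Fin n → R) N = LinearMap.id := by
      apply TensorProduct.ext'
      intro v g
      simp only [LinearMap.comp_apply, LinearMap.id_apply, tensorPiInv_apply]
      have h1 : ∀ j : Fin n, (fun i => TensorProduct.lid R (N i)
          ((LinearMap.proj j).rTensor (N i) (tensorPiMap R (Fin n → R) N (v ⊗ₜ g) i)))
          = v j • g := by
        intro j
        funext i
        rw [tensorPiMap_tmul, rTensor_tmul]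
        simp
      rw [Finset.sum_congr rfl fun j _ => by rw [h1 j]]
      have h2 : ∀ j : Fin n, (Pi.single j 1 : Fin n → R) ⊗ₜ[R] (v j • g)
          = (Pi.single j (v j) : Fin n → R) ⊗ₜ[R] g := by
        intro j
        rw [tmul_smul, smul_tmul', smul_single_one_aux]
      rw [Finset.sum_congr rfl fun j _ => h2 j, ← sum_tmul, Finset.univ_sum_single]
    exact DFunLike.congr_fun this x
  · intro z
    funext i
    rw [tensorPiInv_apply, map_sum]
    have : ∀ j : Fin n, tensorPiMap R (Fin n → R) N ((Pi.single j 1 : Fin n → R) ⊗ₜ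
        (fun i => TensorProduct.lid R (N i) ((LinearMap.proj j).rTensor (N i) (z i)))) i
        = (Pi.single j 1 : Fin n → R) ⊗ₜ
          (TensorProduct.lid R (N i) ((LinearMap.proj j).rTensor (N i) (z i))) := fun j => rfl
    rw [Finset.sum_apply, Finset.sum_congr rfl fun j _ => this j, sum_single_tmul_aux]

end Aux2

theorem s_finitely_presented_iff_fg_and_s_mittagLeffler {R : Type} [CommRing R]
    (S : Submonoid R) {M : Type} [AddCommGroup M] [Module R M] :
    IsSFinitelyPresented R S M ↔
      Module.Finite R M ∧ IsSMittagLeffler R S M (fun N => Module.Flat R (N : Type)) := by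
  constructor
  · rintro ⟨n, f, hf, K', hK'fg, s, hs, hsK⟩
    refine ⟨Module.Finite.of_surjective f hf, ?_⟩
    classical
    intro ι N _hflat x hx
    rw [LinearMap.mem_ker] at hx
    obtain ⟨y, hy⟩ := LinearMap.rTensor_surjective (∀ i, (N i : Type)) hf x
    have hex : ∀ i, Function.Exact ((LinearMap.ker f).subtype.rTensor (N i : Type))
        (f.rTensor (N i : Type)) :=
      fun i => rTensor_exact (N i : Type) (LinearMap.exact_subtype_ker_map f) hf
    have hker : ∀ i, f.rTensor (N i : Type)
        (tensorPiMap R (Fin n → R) (fun i => (N i : Type)) y i) = 0 := by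
      intro i
      have hnat := tensorPiMap_natural (fun i => ((N i : Type))) f y i
      rw [← hnat, hy]
      exact congrFun hx i
    choose z hz using fun i => ((hex i) _).mp (hker i)
    -- K' is finitely generated, get a surjection from a finite free module
    have : Module.Finite R K' := Module.Finite.iff_fg.mpr hK'fg
    obtain ⟨m, π, hπ⟩ := Module.Finite.exists_fin' R K'
    -- the multiplication-by-s map factors through K'
    let g : (LinearMap.ker f) →ₗ[R] K' :=
      LinearMap.codRestrict K' (s • LinearMap.id) hsK
    have hg : (LinearMap.ker f).subtype ∘ₗ (K'.subtype ∘ₗ g)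
        = s • (LinearMap.ker f).subtype := by
      ext k
      simp [g]
    choose w hw using fun i => LinearMap.rTensor_surjective (N i : Type) hπ
      (g.rTensor (N i : Type) (z i))
    let A : (Fin m → R) →ₗ[R] (Fin n → R) :=
      (LinearMap.ker f).subtype ∘ₗ K'.subtype ∘ₗ π
    have hA : ∀ i, A.rTensor (N i : Type) (w i)
        = s • tensorPiMap R (Fin n → R) (fun i => (N i : Type)) y i := by
      intro i
      have e1 : A = ((LinearMap.ker f).subtype ∘ₗ K'.subtype) ∘ₗ π := by
        simp [A, LinearMap.comp_assoc]
      rw [e1, LinearMap.rTensor_comp, LinearMap.comp_apply, hw i,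
        ← LinearMap.comp_apply, ← LinearMap.rTensor_comp, LinearMap.comp_assoc,
        show (LinearMap.ker f).subtype ∘ₗ (K'.subtype ∘ₗ g)
          = s • (LinearMap.ker f).subtype from hg]
      have : (s • (LinearMap.ker f).subtype).rTensor (N i : Type)
          = s • ((LinearMap.ker f).subtype.rTensor (N i : Type)) := by
        apply TensorProduct.ext'
        intro a p
        simp [smul_tmul']
      rw [this, LinearMap.smul_apply, hz i]
    obtain ⟨W, hW⟩ := (tensorPiMap_fin_bijective (fun i => (N i : Type)) m).2 w
    have hAW : tensorPiMap R (Fin n → R) (fun i => (N i : Type))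
        (A.rTensor _ W) = tensorPiMap R (Fin n → R) (fun i => (N i : Type)) (s • y) := by
      funext i
      rw [tensorPiMap_natural, hW, hA i, map_smul]
      rfl
    have hsy : A.rTensor (∀ i, (N i : Type)) W = s • y :=
      (tensorPiMap_fin_bijective (fun i => (N i : Type)) n).1 hAW
    have hfA : f ∘ₗ A = 0 := by
      ext v
      simp only [A, LinearMap.comp_apply, LinearMap.zero_apply, Pi.zero_apply]
      exact LinearMap.mem_ker.mp (SetLike.coe_mem _)
    refine ⟨s, hs, ?_⟩
    calc s • x = f.rTensor _ (s • y) := by rw [← hy, map_smul]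
      _ = f.rTensor _ (A.rTensor _ W) := by rw [hsy]
      _ = (f ∘ₗ A).rTensor _ W := (LinearMap.rTensor_comp_apply _ _ _ W).symm
      _ = 0 := by rw [hfA, LinearMap.rTensor_zero, LinearMap.zero_apply]
  · rintro ⟨hfin, hML⟩
    classical
    obtain ⟨n, f, hf⟩ := Module.Finite.exists_fin' R M
    refine ⟨n, f, hf, ?_⟩
    set K := LinearMap.ker f with hK
    let N : K → ModuleCat R := fun _ => ModuleCat.of R R
    have hflat : ∀ i : K, Module.Flat R (N i : Type) := fun _ => inferInstanceAs (Module.Flat R R)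
    let t : TensorProduct R (Fin n → R) (∀ _ : K, R) :=
      ∑ j : Fin n, (Pi.single j 1 : Fin n → R) ⊗ₜ (fun k : K => (k : Fin n → R) j)
    have hcomp : ∀ k : K, tensorPiMap R (Fin n → R) (fun _ : K => R) t k
        = (k : Fin n → R) ⊗ₜ (1 : R) := by
      intro k
      rw [map_sum]
      rw [Finset.sum_apply]
      have : ∀ j : Fin n, (tensorPiMap R (Fin n → R) (fun _ : K => R)
          ((Pi.single j 1 : Fin n → R) ⊗ₜ (fun k : K => (k : Fin n → R) j))) k
          = (Pi.single j ((k : Fin n → R) j) : Fin n → R) ⊗ₜ (1 : R) := by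
        intro j
        have h1 : (Pi.single j 1 : Fin n → R) ⊗ₜ[R] ((k : Fin n → R) j)
            = (k : Fin n → R) j • ((Pi.single j 1 : Fin n → R) ⊗ₜ[R] (1 : R)) := by
          rw [← tmul_smul, smul_eq_mul, mul_one]
        rw [tensorPiMap_tmul, h1, smul_tmul', smul_single_one_aux]
      rw [Finset.sum_congr rfl fun j _ => this j, ← sum_tmul, Finset.univ_sum_single]
    have hxker : f.rTensor (∀ _ : K, R) t ∈
        LinearMap.ker (tensorPiMap R M (fun i : K => (N i : Type))) := by
      rw [LinearMap.mem_ker]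
      funext k
      have hnat : tensorPiMap R M (fun i : K => ((N i : Type)))
          ((rTensor (∀ i : K, ((N i : Type))) f) t) k
          = f.rTensor ((N k : Type))
            (tensorPiMap R (Fin n → R) (fun i : K => ((N i : Type))) t k) :=
        tensorPiMap_natural _ f t k
      refine hnat.trans ?_
      have h2 := hcomp k
      rw [show tensorPiMap R (Fin n → R) (fun i : K => ((N i : Type))) t k
          = tensorPiMap R (Fin n → R) (fun _ : K => R) t k from rfl, h2, rTensor_tmul]
      have h3 : f (k : Fin n → R) = 0 := LinearMap.mem_ker.mp k.2
      rw [h3]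
      simp
    obtain ⟨s, hs, hsx⟩ := hML K N hflat _ hxker
    have hex : Function.Exact (K.subtype.rTensor (∀ _ : K, R)) (f.rTensor (∀ _ : K, R)) :=
      rTensor_exact (∀ _ : K, R) (LinearMap.exact_subtype_ker_map f) hf
    have h0 : f.rTensor (∀ _ : K, R) (s • t) = 0 := by
      rw [map_smul]; exact hsx
    obtain ⟨z, hz⟩ := (hex (s • t)).mp h0
    obtain ⟨T, hT⟩ := TensorProduct.exists_finset z
    refine ⟨Submodule.span R (↑(T.image Prod.fst) : Set K),
      Submodule.fg_span (Finset.finite_toSet _), s, hs, ?_⟩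
    intro k
    let L : TensorProduct R K (∀ _ : K, R) →ₗ[R] K :=
      (TensorProduct.rid R K).toLinearMap ∘ₗ LinearMap.lTensor K (LinearMap.proj k)
    let L' : TensorProduct R (Fin n → R) (∀ _ : K, R) →ₗ[R] (Fin n → R) :=
      (TensorProduct.rid R (Fin n → R)).toLinearMap ∘ₗ
        LinearMap.lTensor (Fin n → R) (LinearMap.proj k)
    have hLL' : L' ∘ₗ K.subtype.rTensor (∀ _ : K, R) = K.subtype ∘ₗ L := by
      apply TensorProduct.ext'
      intro a p
      simp [L, L']
    have hL't : L' t = (k : Fin n → R) := by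
      simp only [L', t, map_sum, LinearMap.comp_apply]
      have : ∀ j : Fin n, (TensorProduct.rid R (Fin n → R))
          (LinearMap.lTensor (Fin n → R) (LinearMap.proj k)
            ((Pi.single j 1 : Fin n → R) ⊗ₜ (fun k' : K => (k' : Fin n → R) j)))
          = (Pi.single j ((k : Fin n → R) j) : Fin n → R) := by
        intro j
        rw [lTensor_tmul]
        simp only [proj_apply, rid_tmul]
        exact smul_single_one_aux _ j
      calc ∑ j : Fin n, (TensorProduct.rid R (Fin n → R))
            (LinearMap.lTensor (Fin n → R) (LinearMap.proj k)
              ((Pi.single j 1 : Fin n → R) ⊗ₜ (fun k' : K => (k' : Fin n → R) j)))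
          = ∑ j : Fin n, (Pi.single j ((k : Fin n → R) j) : Fin n → R) :=
            Finset.sum_congr rfl fun j _ => this j
        _ = (k : Fin n → R) := Finset.univ_sum_single _
    have key : K.subtype (s • k) = K.subtype (L z) := by
      have h1 : L' (K.subtype.rTensor (∀ _ : K, R) z) = K.subtype (L z) :=
        DFunLike.congr_fun hLL' z
      rw [← h1, hz, map_smul L' s t, hL't, map_smul]
      rfl
    have hsk : s • k = L z := Submodule.injective_subtype K key
    rw [hsk, hT, map_sum]
    refine Submodule.sum_mem _ fun p hp => ?_
    have : L (p.1 ⊗ₜ p.2) = p.2 k • p.1 := by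
      simp [L]
    rw [this]
    exact Submodule.smul_mem _ _ (Submodule.subset_span
      (by exact_mod_cast Finset.mem_image_of_mem Prod.fst hp))
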